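/- arXiv:1505.04479 — 3 statements merged into one kernel-verified Lean document; each statement's English description precedes it below -/
import Mathlib

section
/- For every n ≥ 2 and every S ⊆ {1,…,n−1}, the number of type D_n mirrored permutations whose first n entries have peak set S equals 2^{n−1} times the number of permutations in S_n with peak set S: |P_D(S;n)| = 2^{n−1} · |P(S;n)|. Consequently, if p is a polynomial with |P(S;n)| = p(n)·2^{n−|S|−1}, then |P_D(S;n)| = p(n)·2^{2n−|S|−2}. -/
open Equiv

/-- Position `i` (1-based, with `1 < i < n`) is a peak of the permutation `π ∈ S_n`.
The value of `π` at 1-based position `j` is `π ⟨j - 1, _⟩`; values are 0-based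
(`π i = v` means the written value is `v + 1`). -/
def IsPeak {n : ℕ} (π : Equiv.Perm (Fin n)) (i : ℕ) : Prop :=
  ∃ h : 1 < i ∧ i < n,
    π ⟨i - 2, by omega⟩ < π ⟨i - 1, by omega⟩ ∧ π ⟨i, by omega⟩ < π ⟨i - 1, by omega⟩

/-- `P(S;n)`: permutations in `S_n` with peak set `S`. -/
def peakSetEq (n : ℕ) (S : Finset ℕ) : Set (Equiv.Perm (Fin n)) :=
  {π | ∀ i : ℕ, IsPeak π i ↔ i ∈ S}

/-- `π` ends with an ascent to `k`: `π_{n-1} < π_n` and `π_n = k` (values written `1..n`). -/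
def EndsAscentTo (n k : ℕ) (π : Equiv.Perm (Fin n)) : Prop :=
  ∃ h : 2 ≤ n, π ⟨n - 2, by omega⟩ < π ⟨n - 1, by omega⟩ ∧ ((π ⟨n - 1, by omega⟩ : ℕ) + 1 = k)

/-- `π` ends with a descent to `k`: `π_{n-1} > π_n` and `π_n = k`. -/
def EndsDescentTo (n k : ℕ) (π : Equiv.Perm (Fin n)) : Prop :=
  ∃ h : 2 ≤ n, π ⟨n - 1, by omega⟩ < π ⟨n - 2, by omega⟩ ∧ ((π ⟨n - 1, by omega⟩ : ℕ) + 1 = k)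

/-- `π` ends with an ascent: `π_{n-1} < π_n`. -/
def EndsAscent (n : ℕ) (π : Equiv.Perm (Fin n)) : Prop :=
  ∃ h : 2 ≤ n, π ⟨n - 2, by omega⟩ < π ⟨n - 1, by omega⟩

/-- `π` ends with a descent: `π_{n-1} > π_n`. -/
def EndsDescent (n : ℕ) (π : Equiv.Perm (Fin n)) : Prop :=
  ∃ h : 2 ≤ n, π ⟨n - 1, by omega⟩ < π ⟨n - 2, by omega⟩

/-- `P(S;n)^{↗k}` -/
def ascTo (n : ℕ) (S : Finset ℕ) (k : ℕ) : Set (Equiv.Perm (Fin n)) :=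
  {π ∈ peakSetEq n S | EndsAscentTo n k π}

/-- `P(S;n)_{↘k}` -/
def descTo (n : ℕ) (S : Finset ℕ) (k : ℕ) : Set (Equiv.Perm (Fin n)) :=
  {π ∈ peakSetEq n S | EndsDescentTo n k π}

/-- `overline{P(S;n)}`: elements of `P(S;n)` ending with an ascent. -/
def overlineP (n : ℕ) (S : Finset ℕ) : Set (Equiv.Perm (Fin n)) :=
  {π ∈ peakSetEq n S | EndsAscent n π}

/-- `underline{P(S;n)}`: elements of `P(S;n)` ending with a descent. -/
def underlineP (n : ℕ) (S : Finset ℕ) : Set (Equiv.Perm (Fin n)) :=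
  {π ∈ peakSetEq n S | EndsDescent n π}

/-- Type `C_n` mirrored permutations: `τ_{2n-i+1} = 2n - τ_i + 1` for all `1 ≤ i ≤ 2n`
(1-based); equivalently `τ (j.rev) = (τ j).rev` in 0-based `Fin (2*n)` terms. -/
def mirroredC (n : ℕ) : Set (Equiv.Perm (Fin (2 * n))) :=
  {τ | ∀ j, τ j.rev = (τ j).rev}

/-- Type `D_n` mirrored permutations: mirrored, and the first `n` positions carry an even
number of values from `{n+1, …, 2n}` (i.e. 0-based values `≥ n`). -/
def mirroredD (n : ℕ) : Set (Equiv.Perm (Fin (2 * n))) :=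
  {τ | (∀ j, τ j.rev = (τ j).rev) ∧
    Even ((Finset.univ.filter fun j : Fin (2 * n) => (j : ℕ) < n ∧ n ≤ (τ j : ℕ)).card)}

/-- The pattern bundle `𝒞_n(π)`: mirrored permutations whose first `n` entries have the
same relative order as `π`. -/
def bundleC (n : ℕ) (π : Equiv.Perm (Fin n)) : Set (Equiv.Perm (Fin (2 * n))) :=
  {τ ∈ mirroredC n | ∀ i j : Fin n,
    τ (Fin.castLE (by omega) i) < τ (Fin.castLE (by omega) j) ↔ π i < π j}

/-- The pattern bundle `𝒟_n(π)`. -/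
def bundleD (n : ℕ) (π : Equiv.Perm (Fin n)) : Set (Equiv.Perm (Fin (2 * n))) :=
  {τ ∈ mirroredD n | ∀ i j : Fin n,
    τ (Fin.castLE (by omega) i) < τ (Fin.castLE (by omega) j) ↔ π i < π j}

/-- Position `i` (1-based, `1 < i < n`) is a peak of the first `n` entries of `τ`. -/
def IsPeakFirst (n : ℕ) (τ : Equiv.Perm (Fin (2 * n))) (i : ℕ) : Prop :=
  ∃ h : 1 < i ∧ i < n,
    τ ⟨i - 2, by omega⟩ < τ ⟨i - 1, by omega⟩ ∧ τ ⟨i, by omega⟩ < τ ⟨i - 1, by omega⟩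

/-- `P_C(S;n)`: mirrored permutations of type `C_n` whose first `n` entries have peak set `S`. -/
def P_C (n : ℕ) (S : Finset ℕ) : Set (Equiv.Perm (Fin (2 * n))) :=
  {τ ∈ mirroredC n | ∀ i : ℕ, IsPeakFirst n τ i ↔ i ∈ S}

/-- `P_D(S;n)`. -/
def P_D (n : ℕ) (S : Finset ℕ) : Set (Equiv.Perm (Fin (2 * n))) :=
  {τ ∈ mirroredD n | ∀ i : ℕ, IsPeakFirst n τ i ↔ i ∈ S}

/-- Position `i` (1-based, `1 < i ≤ n`) is a peak of the first `n+1` entries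
`τ_1 ⋯ τ_n τ_{n+1}` of `τ` (so a peak at position `n` is possible). -/
def IsPeakHat (n : ℕ) (τ : Equiv.Perm (Fin (2 * n))) (i : ℕ) : Prop :=
  ∃ h : 1 < i ∧ i ≤ n,
    τ ⟨i - 2, by omega⟩ < τ ⟨i - 1, by omega⟩ ∧ τ ⟨i, by omega⟩ < τ ⟨i - 1, by omega⟩

/-- `hat{P}_C(S;n)`: mirrored permutations of type `C_n` such that `τ_1 ⋯ τ_n τ_{n+1}`
has peak set `S`. -/
def hatPC (n : ℕ) (S : Finset ℕ) : Set (Equiv.Perm (Fin (2 * n))) :=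
  {τ ∈ mirroredC n | ∀ i : ℕ, IsPeakHat n τ i ↔ i ∈ S}

/-- `hat{P}_D(S;n)`. -/
def hatPD (n : ℕ) (S : Finset ℕ) : Set (Equiv.Perm (Fin (2 * n))) :=
  {τ ∈ mirroredD n | ∀ i : ℕ, IsPeakHat n τ i ↔ i ∈ S}

/-- `Φ(n,k) = Σ_{i=k}^n C(n,i)`. -/
def Phi (n k : ℕ) : ℕ := ∑ i ∈ Finset.Icc k n, n.choose i

/-- `Ψ(n,k) = 2^n - Φ(n,k)`. -/
def Psi (n k : ℕ) : ℕ := 2 ^ n - Phi n k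

/-- The group `ℬ_n` of signed permutations on `n` letters. -/
def SignedPerms (n : ℕ) : Set (Fin n → ℤ) :=
  {β | (∀ i, 1 ≤ |β i| ∧ |β i| ≤ (n : ℤ)) ∧ Function.Injective fun i => |β i|}

/-- Position `i` (`1 ≤ i ≤ n - 1`) is a peak of the sequence `0, β_1, …, β_n`. -/
def IsPeakB (n : ℕ) (β : Fin n → ℤ) (i : ℕ) : Prop :=
  ∃ h : 1 ≤ i ∧ i < n,
    (if hi : 2 ≤ i then β ⟨i - 2, by omega⟩ else 0) < β ⟨i - 1, by omega⟩ ∧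
      β ⟨i, by omega⟩ < β ⟨i - 1, by omega⟩

/-- `hat{P}_B(R;n)`: signed permutations such that `0, β_1, …, β_n` has peak set `R`. -/
def hatPB (n : ℕ) (R : Finset ℕ) : Set (Fin n → ℤ) :=
  {β ∈ SignedPerms n | ∀ i : ℕ, IsPeakB n β i ↔ i ∈ R}


/-!
A mirrored permutation `τ` is determined by its first `n` entries, and their values form a
transversal of the pairs `{v, 2n + 1 - v}`. Conversely, listing a transversal in the relative
order of some `π ∈ S_n` and mirroring gives a mirrored permutation. So mirrored permutations
correspond to pairs `(π, s)`: `π` is the standardization of `τ_1 ⋯ τ_n`, and `s ⊆ {1, …, n}`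
records the pairs that contribute their larger element. The peak set of `τ_1 ⋯ τ_n` is that of
`π`, and the type `D` condition says that `|s|` is even. Exactly half of the `2^n` sets `s` are
even, because `∑ₛ (-1)^|s| = 0`.
-/

namespace Finset

theorem two_mul_card_filter_even_card {α : Type*} [Fintype α] [Nonempty α] :
    2 * #{s : Finset α | Even #s} = 2 ^ Fintype.card α := by
  classical
  have halt := sum_powerset_neg_one_pow_card_of_nonempty (univ_nonempty (α := α))
  rw [powerset_univ, ← sum_filter_add_sum_filter_not _ (fun s => Even #s)] at halt
  rw [sum_congr rfl fun s hs => (mem_filter.1 hs).2.neg_one_pow,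
    sum_congr rfl fun s hs => (Nat.not_even_iff_odd.1 (mem_filter.1 hs).2).neg_one_pow] at halt
  have htotal := card_filter_add_card_filter_not (s := (univ : Finset (Finset α)))
    (fun s => Even #s)
  rw [card_univ, Fintype.card_finset] at htotal
  simp only [sum_const, Int.nsmul_eq_mul, mul_one, mul_neg] at halt
  omega

theorem exists_perm_orderIsoOfFin_eq {α : Type*} [LinearOrder α] {A : Finset α} {n : ℕ}
    (hA : #A = n) {f : Fin n → α} (hf : Function.Injective f) (hfA : ∀ i, f i ∈ A) :
    ∃ π : Perm (Fin n), ∀ i, (A.orderIsoOfFin hA (π i) : α) = f i := by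
  let g : Fin n → Fin n := fun i => (A.orderIsoOfFin hA).symm ⟨f i, hfA i⟩
  have hg : Function.Injective g := fun i j h => hf (by simpa [g] using h)
  exact ⟨Equiv.ofBijective g (Finite.injective_iff_bijective.1 hg), fun i => by simp [g]⟩

theorem ncard_setOf_even_card (α : Type*) [Fintype α] [Nonempty α] :
    {s : Finset α | Even s.card}.ncard = 2 ^ (Fintype.card α - 1) := by
  have htwice := two_mul_card_filter_even_card (α := α)
  rw [← Nat.two_pow_pred_mul_two Fintype.card_pos] at htwice
  rw [← coe_filter_univ, Set.ncard_coe_finset]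
  omega

end Finset

namespace MirroredPerm

open Finset

variable {n : ℕ}

abbrev lift (k : Fin n) : Fin (2 * n) := Fin.castLE (by omega) k

def pairIndex (x : Fin (2 * n)) : Fin n := ⟨min x (2 * n - 1 - x), by omega⟩

theorem pairIndex_rev (x : Fin (2 * n)) : pairIndex x.rev = pairIndex x := by
  ext; simp only [pairIndex, Fin.val_rev]; omega

theorem pairIndex_lift (k : Fin n) : pairIndex (lift k) = k := by
  ext; simp only [pairIndex, Fin.val_castLE]; omega

theorem lift_pairIndex {x : Fin (2 * n)} (hx : (x : ℕ) < n) : lift (pairIndex x) = x := by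
  ext; simp only [pairIndex, Fin.val_castLE]; omega

theorem rev_lift_pairIndex {x : Fin (2 * n)} (hx : n ≤ (x : ℕ)) : (lift (pairIndex x)).rev = x := by
  ext; simp only [pairIndex, Fin.val_castLE, Fin.val_rev]; omega

/-- `transversal s` takes the larger element `2n - 1 - k` of the pair `{k, 2n - 1 - k}` exactly
when `k ∈ s`. -/
def transversal (s : Finset (Fin n)) : Finset (Fin (2 * n)) :=
  {x | n ≤ (x : ℕ) ↔ pairIndex x ∈ s}

theorem rev_mem_transversal (s : Finset (Fin n)) (x : Fin (2 * n)) :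
    x.rev ∈ transversal s ↔ x ∉ transversal s := by
  simp only [transversal, mem_filter, mem_univ, true_and, pairIndex_rev, Fin.val_rev]
  have hrev : n ≤ 2 * n - (x + 1) ↔ ¬ n ≤ (x : ℕ) := by omega
  rw [hrev]
  tauto

theorem card_eq_of_rev_mem_iff {B : Finset (Fin (2 * n))} (hB : ∀ x, x.rev ∈ B ↔ x ∉ B) :
    #B = n := by
  have hcompl : Bᶜ = B.image Fin.rev := by
    ext x
    rw [mem_compl, ← hB, mem_image]
    exact ⟨fun h => ⟨x.rev, h, Fin.rev_rev x⟩, by rintro ⟨y, hy, rfl⟩; rwa [Fin.rev_rev]⟩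
  have := card_compl B
  rw [hcompl, card_image_of_injective _ Fin.rev_injective, Fintype.card_fin] at this
  omega

theorem card_transversal (s : Finset (Fin n)) : #(transversal s) = n :=
  card_eq_of_rev_mem_iff (rev_mem_transversal s)

theorem rev_lift_mem_transversal (s : Finset (Fin n)) (k : Fin n) :
    (lift k).rev ∈ transversal s ↔ k ∈ s := by
  have := k.2
  simp only [transversal, mem_filter, mem_univ, true_and, pairIndex_rev, pairIndex_lift,
    Fin.val_rev, Fin.val_castLE]
  exact iff_true_left (by omega)

theorem transversal_injective : Function.Injective (transversal (n := n)) := by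
  intro s t h
  ext k
  rw [← rev_lift_mem_transversal, h, rev_lift_mem_transversal]

theorem eq_transversal_of_rev_mem_iff {B : Finset (Fin (2 * n))}
    (hB : ∀ x, x.rev ∈ B ↔ x ∉ B) : B = transversal {k | (lift k).rev ∈ B} := by
  ext x
  simp only [transversal, mem_filter, mem_univ, true_and]
  by_cases hx : n ≤ (x : ℕ)
  · rw [rev_lift_pairIndex hx]
    tauto
  · rw [lift_pairIndex (by omega), hB]
    tauto

theorem card_filter_le_transversal (s : Finset (Fin n)) :
    #{x ∈ transversal s | n ≤ x.val} = #s := by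
  have himage : {x ∈ transversal s | n ≤ x.val} = s.image fun k => (lift k).rev := by
    ext x
    simp only [transversal, mem_filter, mem_univ, true_and, mem_image]
    constructor
    · rintro ⟨hmem, hx⟩
      exact ⟨pairIndex x, hmem.1 hx, rev_lift_pairIndex hx⟩
    · rintro ⟨k, hk, rfl⟩
      have := k.2
      rw [pairIndex_rev, pairIndex_lift, Fin.val_rev, Fin.val_castLE]
      exact ⟨iff_of_true (by omega) hk, by omega⟩
  exact himage ▸ card_image_of_injective _ (Fin.rev_injective.comp (Fin.castLE_injective _))

def firstHalf (τ : Perm (Fin (2 * n))) (i : Fin n) : Fin (2 * n) := τ (lift i)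

theorem eq_of_firstHalf_eq {τ σ : Perm (Fin (2 * n))} (hτ : τ ∈ mirroredC n)
    (hσ : σ ∈ mirroredC n) (h : firstHalf τ = firstHalf σ) : τ = σ := by
  ext1 j
  by_cases hj : (j : ℕ) < n
  · exact congrFun h ⟨j, hj⟩
  · rw [← Fin.rev_rev j, hτ, hσ]
    exact congrArg Fin.rev (congrFun h ⟨j.rev, by rw [Fin.val_rev]; omega⟩)

def halfImage (τ : Perm (Fin (2 * n))) : Finset (Fin (2 * n)) := univ.image (firstHalf τ)

theorem mem_halfImage_iff (τ : Perm (Fin (2 * n))) (x : Fin (2 * n)) :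
    x ∈ halfImage τ ↔ ((τ.symm x : Fin (2 * n)) : ℕ) < n := by
  simp only [halfImage, firstHalf, mem_image, mem_univ, true_and, ← τ.eq_symm_apply]
  exact ⟨fun ⟨i, hi⟩ => hi ▸ i.2, fun h => ⟨⟨_, h⟩, rfl⟩⟩

theorem rev_mem_halfImage {τ : Perm (Fin (2 * n))} (hτ : τ ∈ mirroredC n) (x : Fin (2 * n)) :
    x.rev ∈ halfImage τ ↔ x ∉ halfImage τ := by
  have hsymm : τ.symm x.rev = (τ.symm x).rev := by
    rw [τ.symm_apply_eq, hτ, τ.apply_symm_apply]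
  rw [mem_halfImage_iff, mem_halfImage_iff, hsymm, Fin.val_rev]
  omega

theorem card_filter_lt_and_le_eq_card_halfImage (τ : Perm (Fin (2 * n))) :
    #{j : Fin (2 * n) | (j : ℕ) < n ∧ n ≤ (τ j : ℕ)} = #{x ∈ halfImage τ | n ≤ x.val} := by
  refine card_bij (fun j _ => τ j) ?_ (fun _ _ _ _ h => τ.injective h) ?_
  · intro j hj
    simp only [mem_filter, mem_univ, true_and, mem_halfImage_iff, τ.symm_apply_apply] at hj ⊢
    exact hj
  · intro x hx
    simp only [mem_filter, mem_halfImage_iff] at hx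
    exact ⟨τ.symm x, by simpa using hx, τ.apply_symm_apply x⟩

def mirrorExt (f : Fin n → Fin (2 * n)) (j : Fin (2 * n)) : Fin (2 * n) :=
  if (j : ℕ) < n then f (pairIndex j) else (f (pairIndex j)).rev

theorem mirrorExt_lift (f : Fin n → Fin (2 * n)) (i : Fin n) : mirrorExt f (lift i) = f i := by
  rw [mirrorExt, if_pos (show ((lift i : Fin (2 * n)) : ℕ) < n from i.2), pairIndex_lift]

theorem mirrorExt_rev (f : Fin n → Fin (2 * n)) (j : Fin (2 * n)) :
    mirrorExt f j.rev = (mirrorExt f j).rev := by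
  have := j.2
  by_cases hj : (j : ℕ) < n
  · rw [mirrorExt, mirrorExt, if_neg (by rw [Fin.val_rev]; omega), if_pos hj, pairIndex_rev]
  · rw [mirrorExt, mirrorExt, if_pos (by rw [Fin.val_rev]; omega), if_neg hj, pairIndex_rev,
      Fin.rev_rev]

theorem mirrorExt_injective {B : Finset (Fin (2 * n))} (hB : ∀ x, x.rev ∈ B ↔ x ∉ B)
    {f : Fin n → Fin (2 * n)} (hf : Function.Injective f) (hfB : ∀ i, f i ∈ B) :
    Function.Injective (mirrorExt f) := by
  have hmem : ∀ j, mirrorExt f j ∈ B ↔ (j : ℕ) < n := fun j => by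
    unfold mirrorExt
    split_ifs with hj
    · exact iff_of_true (hfB _) hj
    · exact iff_of_false (fun h => (hB _).1 h (hfB _)) hj
  intro a b hab
  have hside : (a : ℕ) < n ↔ (b : ℕ) < n := by rw [← hmem, ← hmem, hab]
  have hidx : pairIndex a = pairIndex b := by
    unfold mirrorExt at hab
    split_ifs at hab <;> first | exact hf hab | exact hf (Fin.rev_injective hab) | tauto
  by_cases ha : (a : ℕ) < n
  · rw [← lift_pairIndex ha, ← lift_pairIndex (hside.1 ha), hidx]
  · rw [← rev_lift_pairIndex (not_lt.1 ha), ← rev_lift_pairIndex (not_lt.1 (hside.not.1 ha)),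
      hidx]

noncomputable def enum (s : Finset (Fin n)) (v : Fin n) : Fin (2 * n) :=
  (transversal s).orderIsoOfFin (card_transversal s) v

theorem enum_strictMono (s : Finset (Fin n)) : StrictMono (enum s) :=
  fun _ _ h => ((transversal s).orderIsoOfFin (card_transversal s)).strictMono h

theorem enum_mem (s : Finset (Fin n)) (v : Fin n) : enum s v ∈ transversal s :=
  ((transversal s).orderIsoOfFin (card_transversal s) v).2

noncomputable def mirrorLift (π : Perm (Fin n)) (s : Finset (Fin n)) : Perm (Fin (2 * n)) :=
  Equiv.ofBijective (mirrorExt (enum s ∘ π)) <| Finite.injective_iff_bijective.1 <|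
    mirrorExt_injective (rev_mem_transversal s) ((enum_strictMono s).injective.comp π.injective)
      fun i => enum_mem s (π i)

theorem mirrorLift_mem_mirroredC (π : Perm (Fin n)) (s : Finset (Fin n)) :
    mirrorLift π s ∈ mirroredC n :=
  mirrorExt_rev _

theorem firstHalf_mirrorLift (π : Perm (Fin n)) (s : Finset (Fin n)) :
    firstHalf (mirrorLift π s) = enum s ∘ π :=
  funext (mirrorExt_lift _)

theorem halfImage_mirrorLift (π : Perm (Fin n)) (s : Finset (Fin n)) :
    halfImage (mirrorLift π s) = transversal s := by
  apply eq_of_subset_of_card_le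
  · rw [halfImage, firstHalf_mirrorLift, image_subset_iff]
    exact fun i _ => enum_mem s (π i)
  · have hinj : Function.Injective (firstHalf (mirrorLift π s)) :=
      (mirrorLift π s).injective.comp (Fin.castLE_injective _)
    rw [card_transversal, halfImage, card_image_of_injective _ hinj, card_univ, Fintype.card_fin]

theorem mirrorLift_lift_lt_iff (π : Perm (Fin n)) (s : Finset (Fin n)) (a b : Fin n) :
    mirrorLift π s (lift a) < mirrorLift π s (lift b) ↔ π a < π b := by
  change firstHalf _ a < firstHalf _ b ↔ _
  rw [firstHalf_mirrorLift]
  exact (enum_strictMono s).lt_iff_lt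

theorem isPeakFirst_iff_isPeak {τ : Perm (Fin (2 * n))} {π : Perm (Fin n)}
    (h : ∀ a b, τ (lift a) < τ (lift b) ↔ π a < π b) (i : ℕ) :
    IsPeakFirst n τ i ↔ IsPeak π i := by
  constructor
  · rintro ⟨hi, hl, hr⟩
    exact ⟨hi, (h ⟨i - 2, by omega⟩ ⟨i - 1, by omega⟩).1 hl,
      (h ⟨i, by omega⟩ ⟨i - 1, by omega⟩).1 hr⟩
  · rintro ⟨hi, hl, hr⟩
    exact ⟨hi, (h ⟨i - 2, by omega⟩ ⟨i - 1, by omega⟩).2 hl,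
      (h ⟨i, by omega⟩ ⟨i - 1, by omega⟩).2 hr⟩

theorem mirrorLift_mem_mirroredD_iff (π : Perm (Fin n)) (s : Finset (Fin n)) :
    mirrorLift π s ∈ mirroredD n ↔ Even #s := by
  rw [mirroredD, Set.mem_ofPred_eq, card_filter_lt_and_le_eq_card_halfImage, halfImage_mirrorLift,
    card_filter_le_transversal]
  exact and_iff_right (mirrorLift_mem_mirroredC π s)

theorem mirrorLift_injective :
    Function.Injective fun p : Perm (Fin n) × Finset (Fin n) => mirrorLift p.1 p.2 := by
  rintro ⟨π, s⟩ ⟨σ, t⟩ h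
  dsimp only at h
  obtain rfl : s = t := transversal_injective <| by
    rw [← halfImage_mirrorLift π, ← halfImage_mirrorLift σ, h]
  have hfirst := firstHalf_mirrorLift π s ▸ firstHalf_mirrorLift σ s ▸ congrArg firstHalf h
  exact Prod.ext (Equiv.ext fun i => (enum_strictMono s).injective (congrFun hfirst i)) rfl

theorem exists_mirrorLift_eq {τ : Perm (Fin (2 * n))} (hτ : τ ∈ mirroredC n) :
    ∃ π s, mirrorLift π s = τ := by
  set s : Finset (Fin n) := {k | (lift k).rev ∈ halfImage τ}
  have hs : halfImage τ = transversal s := eq_transversal_of_rev_mem_iff (rev_mem_halfImage hτ)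
  obtain ⟨π, hπ⟩ := exists_perm_orderIsoOfFin_eq (card_transversal s)
    (f := firstHalf τ) (τ.injective.comp (Fin.castLE_injective _))
    fun i => hs ▸ mem_image_of_mem _ (mem_univ i)
  refine ⟨π, s, eq_of_firstHalf_eq (mirrorLift_mem_mirroredC π s) hτ ?_⟩
  rw [firstHalf_mirrorLift]
  exact funext hπ

end MirroredPerm

open MirroredPerm in
theorem P_D_eq_image (n : ℕ) (S : Finset ℕ) :
    P_D n S = (fun p : Perm (Fin n) × Finset (Fin n) => mirrorLift p.1 p.2) ''
      (peakSetEq n S ×ˢ {s | Even s.card}) := by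
  ext τ
  constructor
  · rintro ⟨hτ, hpeak⟩
    obtain ⟨π, s, rfl⟩ := exists_mirrorLift_eq hτ.1
    exact ⟨(π, s), ⟨fun i => (isPeakFirst_iff_isPeak (mirrorLift_lift_lt_iff π s) i).symm.trans
      (hpeak i), (mirrorLift_mem_mirroredD_iff π s).1 hτ⟩, rfl⟩
  · rintro ⟨⟨π, s⟩, ⟨hπ, hs⟩, rfl⟩
    exact ⟨(mirrorLift_mem_mirroredD_iff π s).2 hs,
      fun i => (isPeakFirst_iff_isPeak (mirrorLift_lift_lt_iff π s) i).trans (hπ i)⟩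

theorem stmt12 (n : ℕ) (hn : 2 ≤ n) (S : Finset ℕ) (hS : ∀ x ∈ S, 0 < x ∧ x < n) :
    (P_D n S).ncard = 2 ^ (n - 1) * (peakSetEq n S).ncard ∧
    ∀ p : Polynomial ℚ,
      ((peakSetEq n S).ncard : ℚ) = p.eval (n : ℚ) * 2 ^ (n - S.card - 1) →
      ((P_D n S).ncard : ℚ) = p.eval (n : ℚ) * 2 ^ (2 * n - S.card - 2) := by
  have hcount : (P_D n S).ncard = 2 ^ (n - 1) * (peakSetEq n S).ncard := by
    have : NeZero n := ⟨by omega⟩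
    rw [P_D_eq_image, Set.ncard_image_of_injective _ MirroredPerm.mirrorLift_injective,
      Set.ncard_prod, Finset.ncard_setOf_even_card, Fintype.card_fin, mul_comm]
  refine ⟨hcount, fun p hp => ?_⟩
  have hS_card : S.card ≤ n - 1 := by
    simpa using Finset.card_le_card (s := S) (t := Finset.Ioo 0 n) fun x hx =>
      Finset.mem_Ioo.2 (hS x hx)
  rw [hcount, Nat.cast_mul, hp, Nat.cast_pow, Nat.cast_ofNat, mul_left_comm, ← pow_add]
  congr 2
  omega
end

section
/- Let S ⊆ {1,…,n−1}, let 1 ≤ k ≤ n, and let π ∈ P(S;n)^{↗k} (so π has peak set S, π_{n−1} < π_n, and π_n = k). Then exactly Φ(n,k) of the elements τ ∈ 𝒞_n(π) satisfy τ_n ≤ n, and exactly Ψ(n,k) of the elements τ ∈ 𝒞_n(π) satisfy τ_n > n. -/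
open Equiv

/-!
A mirrored permutation `τ` is determined by `τ_1, …, τ_n`, and for every `v ≤ n` exactly one of
`v` and `2n + 1 - v` occurs among them. In `𝒞_n(π)` the relative order of `τ_1, …, τ_n` is that
of `π`, so `τ` is determined by the set `B ⊆ {1, …, n}` of values `≤ n` in its first half, and
every `B` arises: `𝒞_n(π)` is in bijection with the subsets of `{1, …, n}`. The values `≤ n` are
the `|B|` smallest of `τ_1, …, τ_n`, and `τ_n` has rank `π_n = k` among them, so `τ_n ≤ n` exactly
when `k ≤ |B|`, which happens for `Φ(n,k)` of the `2^n` subsets.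
-/

open Finset

lemma Equiv.Perm.card_filter_apply_lt {n : ℕ} (π : Equiv.Perm (Fin n)) (c : Fin n) :
    #{i | π i < c} = c := by
  rw [card_equiv π (t := {v | v < c}) (by simp), filter_gt_eq_Iio, Fin.card_Iio]

lemma lt_iff_card_filter_lt_lt {ι α : Type*} [Fintype ι] [LinearOrder α] (f : ι → α) (a : ι)
    (c : α) : f a < c ↔ #{i | f i < f a} < #{i | f i < c} := by
  constructor
  · intro ha
    refine card_lt_card ⟨fun i hi => ?_, fun h => ?_⟩
    · simp only [mem_filter, mem_univ, true_and] at hi ⊢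
      exact hi.trans ha
    · exact lt_irrefl (f a) (mem_filter.1 (h (mem_filter.2 ⟨mem_univ a, ha⟩))).2
  · intro h
    by_contra! hc
    exact h.not_ge (card_le_card fun i hi => by
      simp only [mem_filter, mem_univ, true_and] at hi ⊢
      exact hi.trans_le hc)

lemma eq_of_range_eq_of_lt_iff {α : Type*} [LinearOrder α] {n : ℕ} (π : Equiv.Perm (Fin n))
    {f g : Fin n → α} (hf : ∀ i j, f i < f j ↔ π i < π j) (hg : ∀ i j, g i < g j ↔ π i < π j)
    (h : Set.range f = Set.range g) : f = g := by
  have mono : ∀ {f : Fin n → α}, (∀ i j, f i < f j ↔ π i < π j) → StrictMono (f ∘ π.symm) :=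
    fun hf a b hab => (hf _ _).2 (by simpa using hab)
  have := ((mono hf).range_inj (mono hg)).1 (by simpa [Set.range_comp] using h)
  simpa [Function.comp_assoc] using congrArg (· ∘ π) this

lemma card_filter_le_card_eq_Phi (n k : ℕ) : #{B : Finset (Fin n) | k ≤ #B} = Phi n k := by
  have := sum_powerset_apply_card (fun m => if k ≤ m then 1 else 0) (x := (univ : Finset (Fin n)))
  simp only [powerset_univ, sum_boole, Nat.cast_id, card_univ, Fintype.card_fin, smul_eq_mul,
    mul_ite, mul_one, mul_zero] at this
  rw [this, ← sum_filter, Phi]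
  congr 1
  ext i
  simp [and_comm]

lemma card_filter_card_lt_eq_Psi (n k : ℕ) : #{B : Finset (Fin n) | #B < k} = Psi n k := by
  have := card_filter_add_card_filter_not (s := univ) fun B : Finset (Fin n) => k ≤ #B
  simp only [card_filter_le_card_eq_Phi, not_le, card_univ, Fintype.card_finset,
    Fintype.card_fin] at this
  rw [Psi]
  omega

namespace MirroredBundle

variable {n : ℕ}

abbrev castHalf : Fin n → Fin (2 * n) := Fin.castLE (by omega)

lemma val_rev_lt_iff (j : Fin (2 * n)) : (j.rev : ℕ) < n ↔ n ≤ j := by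
  rw [Fin.val_rev]
  omega

lemma castHalf_ne_rev (a b : Fin n) : castHalf a ≠ (castHalf b).rev := by
  intro h
  have := congrArg Fin.val h
  simp only [Fin.val_rev, Fin.val_castLE] at this
  omega

lemma inv_mem_mirroredC {τ : Equiv.Perm (Fin (2 * n))} (hτ : τ ∈ mirroredC n) :
    τ⁻¹ ∈ mirroredC n :=
  fun w => τ.injective (by simp [hτ _])

lemma mirroredC_ext {τ τ' : Equiv.Perm (Fin (2 * n))} (hτ : τ ∈ mirroredC n)
    (hτ' : τ' ∈ mirroredC n) (h : ∀ i, τ (castHalf i) = τ' (castHalf i)) : τ = τ' := by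
  ext1 j
  rcases lt_or_ge (j : ℕ) n with hj | hj
  · exact h ⟨j, hj⟩
  · rw [← j.rev_rev, hτ, hτ']
    exact congrArg Fin.rev (h ⟨j.rev, (val_rev_lt_iff j).2 hj⟩)

lemma range_comp_castHalf (τ : Equiv.Perm (Fin (2 * n))) :
    Set.range (τ ∘ castHalf) = {w | (τ⁻¹ w : ℕ) < n} := by
  ext w
  constructor
  · rintro ⟨i, rfl⟩
    simp
  · intro hw
    exact ⟨⟨τ⁻¹ w, hw⟩, by simp⟩

/-- The values `v ∈ {1, …, n}` that occur among `τ_1, …, τ_n`. -/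
def smallValues (τ : Equiv.Perm (Fin (2 * n))) : Finset (Fin n) :=
  {v | (τ⁻¹ (castHalf v) : ℕ) < n}

lemma card_smallValues (τ : Equiv.Perm (Fin (2 * n))) :
    #(smallValues τ) = #{i : Fin n | (τ (castHalf i) : ℕ) < n} := by
  refine card_bij' (fun v hv => ⟨τ⁻¹ (castHalf v), (mem_filter.1 hv).2⟩)
    (fun i hi => ⟨τ (castHalf i), (mem_filter.1 hi).2⟩) ?_ ?_ ?_ ?_ <;>
    intros <;> simp_all [smallValues]

lemma inv_rev_lt_iff {τ : Equiv.Perm (Fin (2 * n))} (hτ : τ ∈ mirroredC n) (w : Fin (2 * n)) :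
    (τ⁻¹ w.rev : ℕ) < n ↔ ¬ (τ⁻¹ w : ℕ) < n := by
  rw [inv_mem_mirroredC hτ w, val_rev_lt_iff, not_lt]

/-- By mirror symmetry, `smallValues τ` determines the whole set `{τ_1, …, τ_n}`. -/
lemma inv_lt_iff_of_smallValues_eq {τ τ' : Equiv.Perm (Fin (2 * n))} (hτ : τ ∈ mirroredC n)
    (hτ' : τ' ∈ mirroredC n) (h : smallValues τ = smallValues τ') (w : Fin (2 * n)) :
    (τ⁻¹ w : ℕ) < n ↔ (τ'⁻¹ w : ℕ) < n := by
  have small : ∀ v : Fin n, (τ⁻¹ (castHalf v) : ℕ) < n ↔ (τ'⁻¹ (castHalf v) : ℕ) < n := by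
    intro v
    simpa [smallValues] using congrArg (v ∈ ·) h
  rcases lt_or_ge (w : ℕ) n with hw | hw
  · exact small ⟨w, hw⟩
  · rw [← w.rev_rev, inv_rev_lt_iff hτ, inv_rev_lt_iff hτ']
    exact not_congr (small ⟨w.rev, (val_rev_lt_iff w).2 hw⟩)

lemma smallValues_injOn (π : Equiv.Perm (Fin n)) : Set.InjOn smallValues (bundleC n π) := by
  intro τ hτ τ' hτ' h
  have hrange : Set.range (τ ∘ castHalf) = Set.range (τ' ∘ castHalf) := by
    rw [range_comp_castHalf, range_comp_castHalf]
    ext w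
    exact inv_lt_iff_of_smallValues_eq hτ.1 hτ'.1 h w
  have hhalf := eq_of_range_eq_of_lt_iff π hτ.2 hτ'.2 hrange
  exact mirroredC_ext hτ.1 hτ'.1 (congrFun hhalf)

def signedCast (B : Finset (Fin n)) (v : Fin n) : Fin (2 * n) :=
  if v ∈ B then castHalf v else (castHalf v).rev

lemma signedCast_injective (B : Finset (Fin n)) : Function.Injective (signedCast B) := by
  intro a b h
  unfold signedCast at h
  split_ifs at h
  · exact Fin.castLE_injective _ h
  · exact absurd h (castHalf_ne_rev a b)
  · exact absurd h.symm (castHalf_ne_rev b a)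
  · exact Fin.castLE_injective _ (Fin.rev_injective h)

lemma signedCast_ne_rev (B : Finset (Fin n)) (a b : Fin n) :
    signedCast B a ≠ (signedCast B b).rev := by
  unfold signedCast
  split_ifs with ha hb hb
  · exact castHalf_ne_rev a b
  · rw [Fin.rev_rev]
    exact fun h => hb (Fin.castLE_injective _ h ▸ ha)
  · exact fun h => ha (Fin.castLE_injective _ (Fin.rev_injective h) ▸ hb)
  · rw [Fin.rev_rev]
    exact fun h => castHalf_ne_rev b a h.symm

lemma signedCast_eq_castHalf_iff {B : Finset (Fin n)} {a v : Fin n} :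
    signedCast B a = castHalf v ↔ a = v ∧ v ∈ B := by
  unfold signedCast
  split_ifs with ha
  · exact ⟨fun h => ⟨Fin.castLE_injective _ h, Fin.castLE_injective _ h ▸ ha⟩,
      fun h => h.1 ▸ rfl⟩
  · exact ⟨fun h => absurd h.symm (castHalf_ne_rev v a), fun h => absurd (h.1 ▸ h.2) ha⟩

/-- The candidate set `{τ_1, …, τ_n}`: `v + 1` for `v ∈ B`, and `2n - v` for `v ∉ B`. -/
def firstHalfValues (B : Finset (Fin n)) : Finset (Fin (2 * n)) :=
  univ.image (signedCast B)

lemma card_firstHalfValues (B : Finset (Fin n)) : #(firstHalfValues B) = n := by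
  rw [firstHalfValues, card_image_of_injective _ (signedCast_injective B), card_univ,
    Fintype.card_fin]

noncomputable def firstHalf (π : Equiv.Perm (Fin n)) (B : Finset (Fin n)) :
    Fin n → Fin (2 * n) :=
  (firstHalfValues B).orderEmbOfFin (card_firstHalfValues B) ∘ π

lemma range_firstHalf (π : Equiv.Perm (Fin n)) (B : Finset (Fin n)) :
    Set.range (firstHalf π B) = firstHalfValues B := by
  rw [firstHalf, Set.range_comp, π.range_eq_univ, Set.image_univ, range_orderEmbOfFin]

lemma firstHalf_lt_iff (π : Equiv.Perm (Fin n)) (B : Finset (Fin n)) (i j : Fin n) :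
    firstHalf π B i < firstHalf π B j ↔ π i < π j :=
  OrderEmbedding.lt_iff_lt _

lemma firstHalf_injective (π : Equiv.Perm (Fin n)) (B : Finset (Fin n)) :
    Function.Injective (firstHalf π B) :=
  ((firstHalfValues B).orderEmbOfFin _).injective.comp π.injective

lemma firstHalf_ne_rev (π : Equiv.Perm (Fin n)) (B : Finset (Fin n)) (i j : Fin n) :
    firstHalf π B i ≠ (firstHalf π B j).rev := by
  obtain ⟨a, -, ha⟩ := mem_image.1 (orderEmbOfFin_mem _ (card_firstHalfValues B) (π i))
  obtain ⟨b, -, hb⟩ := mem_image.1 (orderEmbOfFin_mem _ (card_firstHalfValues B) (π j))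
  simp only [firstHalf, Function.comp_apply, ← ha, ← hb]
  exact signedCast_ne_rev B a b

def mirrorExtend (f : Fin n → Fin (2 * n)) (j : Fin (2 * n)) : Fin (2 * n) :=
  if h : (j : ℕ) < n then f ⟨j, h⟩ else (f ⟨j.rev, (val_rev_lt_iff j).2 (by omega)⟩).rev

lemma mirrorExtend_castHalf (f : Fin n → Fin (2 * n)) (i : Fin n) :
    mirrorExtend f (castHalf i) = f i := by
  simp [mirrorExtend]

lemma mirrorExtend_rev (f : Fin n → Fin (2 * n)) (j : Fin (2 * n)) :
    mirrorExtend f j.rev = (mirrorExtend f j).rev := by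
  rcases lt_or_ge (j : ℕ) n with hj | hj
  · rw [mirrorExtend, dif_neg (by rw [val_rev_lt_iff]; omega), mirrorExtend, dif_pos hj]
    simp
  · rw [mirrorExtend, dif_pos ((val_rev_lt_iff j).2 hj), mirrorExtend, dif_neg (by omega),
      Fin.rev_rev]

lemma mirrorExtend_injective {f : Fin n → Fin (2 * n)} (hf : Function.Injective f)
    (hrev : ∀ i j, f i ≠ (f j).rev) : Function.Injective (mirrorExtend f) := by
  intro a b h
  unfold mirrorExtend at h
  split_ifs at h with ha hb hb
  · exact Fin.ext (congrArg (Fin.val : Fin n → ℕ) (hf h))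
  · exact absurd h (hrev _ _)
  · exact absurd h.symm (hrev _ _)
  · have := congrArg (Fin.val : Fin n → ℕ) (hf (Fin.rev_injective h))
    simp only [Fin.val_rev] at this
    exact Fin.ext (by omega)

noncomputable def bundleElem (π : Equiv.Perm (Fin n)) (B : Finset (Fin n)) :
    Equiv.Perm (Fin (2 * n)) :=
  Equiv.ofBijective _ (Finite.injective_iff_bijective.1 (mirrorExtend_injective
    (firstHalf_injective π B) (firstHalf_ne_rev π B)))

lemma bundleElem_castHalf (π : Equiv.Perm (Fin n)) (B : Finset (Fin n)) (i : Fin n) :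
    bundleElem π B (castHalf i) = firstHalf π B i :=
  mirrorExtend_castHalf _ i

lemma bundleElem_mem_bundleC (π : Equiv.Perm (Fin n)) (B : Finset (Fin n)) :
    bundleElem π B ∈ bundleC n π :=
  ⟨mirrorExtend_rev _, fun i j => by
    simpa only [bundleElem_castHalf] using firstHalf_lt_iff π B i j⟩

lemma smallValues_bundleElem (π : Equiv.Perm (Fin n)) (B : Finset (Fin n)) :
    smallValues (bundleElem π B) = B := by
  have hrange : Set.range (bundleElem π B ∘ castHalf) = firstHalfValues B := by
    rw [← range_firstHalf π B]
    exact congrArg Set.range (funext (bundleElem_castHalf π B))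
  ext v
  have := congrArg (castHalf v ∈ ·) hrange
  simp only [range_comp_castHalf, Set.mem_ofPred_eq, coe_image, coe_univ, Set.image_univ,
    Set.mem_range, firstHalfValues, signedCast_eq_castHalf_iff, exists_eq_left] at this
  simpa [smallValues] using this

lemma ncard_bundleC_sep (π : Equiv.Perm (Fin n)) (p : Finset (Fin n) → Prop) [DecidablePred p] :
    {τ ∈ bundleC n π | p (smallValues τ)}.ncard = #{B | p B} := by
  rw [← Set.ncard_coe_finset, ← ((smallValues_injOn π).mono (Set.sep_subset _ _)).ncard_image]
  congr 1
  ext B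
  constructor
  · rintro ⟨τ, ⟨-, hp⟩, rfl⟩
    simpa using hp
  · intro hp
    refine ⟨bundleElem π B, ⟨bundleElem_mem_bundleC π B, ?_⟩, smallValues_bundleElem π B⟩
    simpa [smallValues_bundleElem] using hp

/-- The values `≤ n` form an initial segment of `{τ_1, …, τ_n}`, so `τ_a ≤ n` exactly when the
rank `π_a` of `τ_a` in that set is at most their number. -/
lemma val_lt_iff_lt_card_smallValues {π : Equiv.Perm (Fin n)} {τ : Equiv.Perm (Fin (2 * n))}
    (hτ : τ ∈ bundleC n π) (a : Fin n) :
    (τ (castHalf a) : ℕ) < n ↔ (π a : ℕ) < #(smallValues τ) := by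
  rw [lt_iff_card_filter_lt_lt (fun i => (τ (castHalf i) : ℕ)) a n, card_smallValues,
    ← π.card_filter_apply_lt (π a)]
  refine Iff.of_eq (congrArg (· < _) (congrArg card (filter_congr fun i _ => ?_)))
  exact (Fin.lt_def.symm).trans (hτ.2 i a)

end MirroredBundle

open MirroredBundle in
theorem stmt13 (n k : ℕ) (S : Finset ℕ)
    (hk : 1 ≤ k) (hkn : k ≤ n) (π : Equiv.Perm (Fin n)) (hπ : π ∈ ascTo n S k) :
    {τ ∈ bundleC n π | (τ ⟨n - 1, by omega⟩ : ℕ) < n}.ncard = Phi n k ∧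
    {τ ∈ bundleC n π | n ≤ (τ ⟨n - 1, by omega⟩ : ℕ)}.ncard = Psi n k := by
  obtain ⟨-, _, -, hlast⟩ := hπ
  have hsmall : ∀ τ ∈ bundleC n π, (τ ⟨n - 1, by omega⟩ : ℕ) < n ↔ k ≤ #(smallValues τ) := by
    intro τ hτ
    rw [← hlast, Nat.add_one_le_iff]
    exact val_lt_iff_lt_card_smallValues hτ ⟨n - 1, by omega⟩
  have hlarge : ∀ τ ∈ bundleC n π, n ≤ (τ ⟨n - 1, by omega⟩ : ℕ) ↔ #(smallValues τ) < k := by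
    intro τ hτ
    rw [← not_lt, hsmall τ hτ, not_le]
  rw [Set.sep_ext_iff.2 hsmall, Set.sep_ext_iff.2 hlarge, ncard_bundleC_sep π (k ≤ #·),
    ncard_bundleC_sep π (#· < k)]
  exact ⟨card_filter_le_card_eq_Phi n k, card_filter_card_lt_eq_Psi n k⟩
end

section
/- Let n ≥ 2 be even and S ⊆ {1,…,n−1}. Then |hat{P}_D(S;n)| = Σ_{k=1}^{n/2} (|P(S;n)^{↗2k−1}| + |P(S;n)^{↗2k}|)·Φ(n−1, 2k−1) + |underline{P(S;n)}|·2^{n−1}, and |hat{P}_D(S∪{n};n)| = Σ_{k=1}^{n/2} (|P(S;n)^{↗2k−1}| + |P(S;n)^{↗2k}|)·Ψ(n−1, 2k−1). -/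
open Equiv

/-!
A mirrored permutation `τ` of `[2n]` is determined by the pattern `π ∈ S_n` of its first `n`
entries together with the set `A ⊆ [n]` of letters `w` whose mirror image `2n + 1 - w`, rather
than `w` itself, occurs among them; `τ` is of type `D` exactly when `|A|` is even. The first-half
values above `n` are the `|A|` largest ones, so `τ_n > n` iff `π_n > n - |A|`. Since
`τ_{n+1} = 2n + 1 - τ_n`, the peaks of `τ_1 ⋯ τ_{n+1}` below `n` are those of `π`, and `n` is a
peak iff `π` ends with an ascent to some `k` with `|A| > n - k`. For even `n`,
`∑_{t even, t ≤ n - k} C(n, t) = Φ(n - 1, 2⌈k/2⌉ - 1)` by `C(n, t) = C(n, n - t)` and Pascal's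
rule, while permutations ending with a descent admit all `2^(n-1)` even sets `A`.
-/

open Finset

theorem Finset.card_filter_lt_orderEmbOfFin {α : Type*} [LinearOrder α] (s : Finset α) {k : ℕ}
    (h : #s = k) (r : Fin k) : #{x ∈ s | x < s.orderEmbOfFin h r} = r := by
  set e := s.orderEmbOfFin h
  rw [← s.image_orderEmbOfFin_univ h, filter_image, card_image_of_injective _ e.injective,
    ← Fin.card_Iio r]
  congr 1
  ext
  simp [e]

theorem Finset.orderEmbOfFin_lt_iff {α : Type*} [LinearOrder α] (s : Finset α) {k : ℕ}
    (h : #s = k) (r : Fin k) (c : α) : s.orderEmbOfFin h r < c ↔ (r : ℕ) < #{x ∈ s | x < c} := by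
  rw [← s.card_filter_lt_orderEmbOfFin h r]
  constructor
  · intro hc
    refine card_lt_card ⟨monotone_filter_right s fun x _ hx => hx.trans hc, fun hsub => ?_⟩
    exact lt_irrefl _ (mem_filter.1 (hsub (mem_filter.2 ⟨s.orderEmbOfFin_mem h r, hc⟩))).2
  · intro hlt
    by_contra! hc
    exact (card_le_card (monotone_filter_right s fun x _ hx => hx.trans_le hc)).not_gt hlt

theorem Fintype.sum_ite_mem_eq_ncard_mul {α : Type*} [Fintype α] (X : Set α)
    [DecidablePred (· ∈ X)] (c : ℕ) : ∑ a, (if a ∈ X then c else 0) = X.ncard * c := by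
  rw [sum_ite, sum_const_zero, add_zero, sum_const, smul_eq_mul, ← Set.ncard_coe_finset,
    coe_filter_univ, Set.ofPred_mem_eq]

theorem sum_Icc_one_two_mul (f : ℕ → ℕ) (m : ℕ) :
    ∑ i ∈ Icc 1 (2 * m), f i = ∑ j ∈ Icc 1 m, (f (2 * j - 1) + f (2 * j)) := by
  induction m with
  | zero => rfl
  | succ m ih =>
    rw [sum_Icc_succ_top (by omega), ← ih, show 2 * (m + 1) = 2 * m + 1 + 1 by ring,
      sum_Icc_succ_top (by omega), sum_Icc_succ_top (by omega), add_assoc]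
    rfl

theorem sum_Icc_mul_succ_div_two (f g : ℕ → ℕ) (m : ℕ) :
    ∑ k ∈ Icc 1 (2 * m), f k * g ((k + 1) / 2)
      = ∑ j ∈ Icc 1 m, (f (2 * j - 1) + f (2 * j)) * g j := by
  rw [sum_Icc_one_two_mul]
  refine sum_congr rfl fun j hj => ?_
  rw [mem_Icc] at hj
  rw [show (2 * j - 1 + 1) / 2 = j by omega, show (2 * j + 1) / 2 = j by omega, add_mul]

theorem sum_Icc_choose_two_mul (N j m : ℕ) :
    ∑ u ∈ Icc j m, (N + 1).choose (2 * u) = ∑ i ∈ Icc (2 * j - 1) (2 * m), N.choose i := by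
  induction m with
  | zero =>
    rcases Nat.eq_zero_or_pos j with rfl | hj
    · simp
    · rw [Icc_eq_empty (by omega), Icc_eq_empty (by omega), sum_empty, sum_empty]
  | succ m ih =>
    rcases le_or_gt j (m + 1) with hj | hj
    · rw [sum_Icc_succ_top hj, ih, show 2 * (m + 1) = 2 * m + 1 + 1 by ring,
        sum_Icc_succ_top (by omega), sum_Icc_succ_top (by omega), Nat.choose_succ_succ, add_assoc]
    · rw [Icc_eq_empty (by omega), Icc_eq_empty (by omega), sum_empty, sum_empty]

theorem card_filter_card_eq_sum {n : ℕ} (P : ℕ → Prop) [DecidablePred P] :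
    #{A : Finset (Fin n) | P #A} = ∑ t ∈ range (n + 1) with P t, n.choose t := by
  rw [card_filter, ← powerset_univ, sum_powerset_apply_card (fun t => if P t then 1 else 0),
    card_univ, Fintype.card_fin, sum_filter]
  simp

theorem sum_even_choose_le_sub {n k : ℕ} (hn : Even n) (hn0 : 0 < n) (hk : k ≤ n) :
    ∑ t ∈ range (n + 1) with Even t ∧ t ≤ n - k, n.choose t
      = Phi (n - 1) (2 * ((k + 1) / 2) - 1) := by
  obtain ⟨m, hm⟩ := hn
  obtain ⟨N, rfl⟩ : ∃ N, n = N + 1 := ⟨n - 1, by omega⟩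
  -- `t ↦ n - t` turns the even `t ≤ n - k` into the even `2u ≥ k`.
  have hsymm : ∑ t ∈ range (N + 2) with Even t ∧ t ≤ N + 1 - k, (N + 1).choose t
      = ∑ u ∈ Icc ((k + 1) / 2) m, (N + 1).choose (2 * u) := by
    refine sum_nbij' (fun t => m - t / 2) (fun u => 2 * (m - u)) ?_ ?_ ?_ ?_ ?_ <;>
      simp only [mem_filter, mem_range, mem_Icc, Nat.even_iff]
    · omega
    · omega
    · omega
    · omega
    · intro t ht
      rw [show 2 * (m - t / 2) = N + 1 - t by omega, Nat.choose_symm (by omega)]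
  rw [hsymm, sum_Icc_choose_two_mul, Nat.add_sub_cancel, Phi, show 2 * m = N + 1 by omega,
    sum_Icc_succ_top (by omega), Nat.choose_succ_self, add_zero]

theorem card_even_subsets_add_le {n k : ℕ} (hn : Even n) (hn0 : 0 < n) (hk : k ≤ n) :
    #{A : Finset (Fin n) | Even #A ∧ k + #A ≤ n} = Phi (n - 1) (2 * ((k + 1) / 2) - 1) := by
  rw [← sum_even_choose_le_sub hn hn0 hk, ← card_filter_card_eq_sum (fun t => Even t ∧ t ≤ n - k)]
  congr 1
  ext A
  simp only [mem_filter, mem_univ, true_and]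
  exact and_congr_right fun _ => by omega

theorem card_even_subsets {n : ℕ} (hn : Even n) (hn0 : 0 < n) :
    #{A : Finset (Fin n) | Even #A} = 2 ^ (n - 1) := by
  have := card_even_subsets_add_le hn hn0 (Nat.zero_le n)
  rw [Phi, ← Nat.range_succ_eq_Icc_zero, Nat.sum_range_choose] at this
  rw [← this]
  have hA : ∀ A : Finset (Fin n), #A ≤ n := fun A => (card_le_univ A).trans_eq (Fintype.card_fin n)
  exact congrArg card (filter_congr fun A _ => by simp [hA A])

theorem card_even_subsets_lt_add {n k : ℕ} (hn : Even n) (hn0 : 0 < n) (hk : k ≤ n) :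
    #{A : Finset (Fin n) | Even #A ∧ n < k + #A} = Psi (n - 1) (2 * ((k + 1) / 2) - 1) := by
  rw [Psi, ← card_even_subsets hn hn0, ← card_even_subsets_add_le hn hn0 hk,
    ← card_filter_add_card_filter_not (s := {A : Finset (Fin n) | Even #A}) (fun A => k + #A ≤ n),
    filter_filter, filter_filter, Nat.add_sub_cancel_left]
  simp only [not_le]

section MirroredPerm

variable {n : ℕ}

-- Values are 0-based as in `mirroredC`: the mirror image of the letter `w` is `2n - 1 - w`.
def signedValue (A : Finset (Fin n)) (w : Fin n) : Fin (2 * n) :=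
  if w ∈ A then (Fin.castLE (by omega) w).rev else Fin.castLE (by omega) w

theorem val_signedValue (A : Finset (Fin n)) (w : Fin n) :
    (signedValue A w : ℕ) = if w ∈ A then 2 * n - 1 - w else w := by
  unfold signedValue
  split_ifs <;> simp [Fin.val_rev]
  omega

theorem signedValue_injective (A : Finset (Fin n)) : Function.Injective (signedValue A) := by
  intro a b h
  have := congrArg Fin.val h
  rw [val_signedValue, val_signedValue] at this
  ext
  split_ifs at this <;> omega

def valueSet (A : Finset (Fin n)) : Finset (Fin (2 * n)) := univ.image (signedValue A)

theorem card_valueSet (A : Finset (Fin n)) : #(valueSet A) = n := by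
  rw [valueSet, card_image_of_injective _ (signedValue_injective A), card_univ, Fintype.card_fin]

theorem mem_valueSet_of_lt {A : Finset (Fin n)} {v : Fin (2 * n)} (hv : (v : ℕ) < n) :
    v ∈ valueSet A ↔ ⟨v, hv⟩ ∉ A := by
  simp only [valueSet, mem_image, mem_univ, true_and, Fin.ext_iff, val_signedValue]
  constructor
  · rintro ⟨w, hw⟩
    split_ifs at hw with hwA
    · omega
    · rwa [show (⟨v, hv⟩ : Fin n) = w by ext; exact hw.symm]
  · exact fun h => ⟨⟨v, hv⟩, by simp [h]⟩

theorem rev_mem_valueSet_of_lt {A : Finset (Fin n)} {v : Fin (2 * n)} (hv : (v : ℕ) < n) :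
    v.rev ∈ valueSet A ↔ ⟨v, hv⟩ ∈ A := by
  simp only [valueSet, mem_image, mem_univ, true_and, Fin.ext_iff, val_signedValue, Fin.val_rev]
  constructor
  · rintro ⟨w, hw⟩
    split_ifs at hw with hwA
    · rwa [show (⟨v, hv⟩ : Fin n) = w by ext; simp only; omega]
    · omega
  · exact fun h => ⟨⟨v, hv⟩, by simp only [h, if_true]; omega⟩

theorem rev_mem_valueSet_iff {A : Finset (Fin n)} (v : Fin (2 * n)) :
    v.rev ∈ valueSet A ↔ v ∉ valueSet A := by
  rcases lt_or_ge (v : ℕ) n with hv | hv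
  · rw [rev_mem_valueSet_of_lt hv, mem_valueSet_of_lt hv, not_not]
  · have hu : (v.rev : ℕ) < n := by rw [Fin.val_rev]; omega
    conv_rhs => rw [← Fin.rev_rev v]
    rw [rev_mem_valueSet_of_lt hu, mem_valueSet_of_lt hu]

theorem card_filter_le_valueSet (A : Finset (Fin n)) :
    #((valueSet A).filter fun v : Fin (2 * n) => n ≤ (v : ℕ)) = #A := by
  rw [valueSet, filter_image, card_image_of_injective _ (signedValue_injective A)]
  congr 1
  ext w
  simp only [mem_filter, mem_univ, true_and, val_signedValue]
  split_ifs with hw <;> simp only [hw, iff_true, iff_false, not_le] <;> omega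

def valueSetEmb (A : Finset (Fin n)) : Fin n ↪o Fin (2 * n) :=
  (valueSet A).orderEmbOfFin (card_valueSet A)

theorem valueSetEmb_mem (A : Finset (Fin n)) (r : Fin n) : valueSetEmb A r ∈ valueSet A :=
  orderEmbOfFin_mem _ _ r

theorem exists_valueSetEmb_eq {A : Finset (Fin n)} {v : Fin (2 * n)} (hv : v ∈ valueSet A) :
    ∃ r, valueSetEmb A r = v := by
  rwa [← Set.mem_range, valueSetEmb, range_orderEmbOfFin]

theorem le_valueSetEmb_iff (A : Finset (Fin n)) (r : Fin n) :
    n ≤ (valueSetEmb A r : ℕ) ↔ n - #A ≤ r := by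
  have hn : n < 2 * n := by have := r.pos; omega
  have hlow : #{v ∈ valueSet A | v < ⟨n, hn⟩} = n - #A := by
    have := card_filter_add_card_filter_not (s := valueSet A) (· < (⟨n, hn⟩ : Fin (2 * n)))
    simp only [Fin.lt_def, not_lt, card_valueSet] at this ⊢
    have := card_filter_le_valueSet A
    omega
  rw [← not_lt, ← not_lt, ← hlow, ← Finset.orderEmbOfFin_lt_iff, valueSetEmb, Fin.lt_def]

def mirrorExtend (f : Fin n → Fin (2 * n)) (i : Fin (2 * n)) : Fin (2 * n) :=
  if h : (i : ℕ) < n then f ⟨i, h⟩ else (f ⟨i.rev, by rw [Fin.val_rev]; omega⟩).rev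

theorem mirrorExtend_of_lt (f : Fin n → Fin (2 * n)) {i : Fin (2 * n)} (h : (i : ℕ) < n) :
    mirrorExtend f i = f ⟨i, h⟩ := dif_pos h

theorem mirrorExtend_rev (f : Fin n → Fin (2 * n)) (i : Fin (2 * n)) :
    mirrorExtend f i.rev = (mirrorExtend f i).rev := by
  have hrev : (i.rev : ℕ) = 2 * n - 1 - i := by rw [Fin.val_rev]; omega
  rcases lt_or_ge (i : ℕ) n with h | h
  · rw [mirrorExtend, dif_neg (by omega), mirrorExtend, dif_pos h]
    simp only [Fin.rev_rev]
  · rw [mirrorExtend, dif_pos (by omega), mirrorExtend, dif_neg (by omega), Fin.rev_rev]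

theorem mirrorExtend_injective {f : Fin n → Fin (2 * n)} (hf : Function.Injective f)
    (hrev : ∀ a b, f a ≠ (f b).rev) : Function.Injective (mirrorExtend f) := by
  intro i j h
  unfold mirrorExtend at h
  split_ifs at h with hi hj hj
  · simpa [Fin.ext_iff] using hf h
  · exact absurd h (hrev _ _)
  · exact absurd h.symm (hrev _ _)
  · have := congrArg Fin.val (hf (Fin.rev_injective h))
    simp only [Fin.val_rev] at this
    ext
    omega

theorem valueSetEmb_ne_rev (A : Finset (Fin n)) (a b : Fin n) :
    valueSetEmb A a ≠ (valueSetEmb A b).rev :=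
  fun h => (rev_mem_valueSet_iff _).1 (h ▸ valueSetEmb_mem A a) (valueSetEmb_mem A b)

noncomputable def mirrorPerm (π : Perm (Fin n)) (A : Finset (Fin n)) : Perm (Fin (2 * n)) :=
  Equiv.ofBijective (mirrorExtend (valueSetEmb A ∘ π)) <| Finite.injective_iff_bijective.mp <|
    mirrorExtend_injective ((valueSetEmb A).injective.comp π.injective)
      fun _ _ => valueSetEmb_ne_rev A _ _

theorem mirrorPerm_of_lt (π : Perm (Fin n)) (A : Finset (Fin n)) {j : Fin (2 * n)}
    (h : (j : ℕ) < n) : mirrorPerm π A j = valueSetEmb A (π ⟨j, h⟩) :=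
  mirrorExtend_of_lt _ h

theorem mirrorPerm_mem_mirroredC (π : Perm (Fin n)) (A : Finset (Fin n)) :
    mirrorPerm π A ∈ mirroredC n :=
  mirrorExtend_rev _

theorem mirroredC_ext {τ σ : Perm (Fin (2 * n))} (hτ : τ ∈ mirroredC n)
    (hσ : σ ∈ mirroredC n) (h : ∀ j : Fin (2 * n), (j : ℕ) < n → τ j = σ j) : τ = σ := by
  ext j : 1
  rcases lt_or_ge (j : ℕ) n with hj | hj
  · exact h j hj
  · rw [← Fin.rev_rev j, hτ, hσ, h _ (by rw [Fin.val_rev]; omega)]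

def firstValues (τ : Perm (Fin (2 * n))) : Finset (Fin (2 * n)) :=
  ({j | (j : ℕ) < n} : Finset (Fin (2 * n))).image τ

theorem mem_firstValues {τ : Perm (Fin (2 * n))} {v : Fin (2 * n)} :
    v ∈ firstValues τ ↔ (τ.symm v : ℕ) < n := by
  simp only [firstValues, mem_image, mem_filter, mem_univ, true_and]
  exact ⟨fun ⟨j, hj, hjv⟩ => by rwa [← hjv, Equiv.symm_apply_apply], fun h => ⟨_, h, by simp⟩⟩

theorem rev_mem_firstValues_iff {τ : Perm (Fin (2 * n))} (hτ : τ ∈ mirroredC n)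
    (v : Fin (2 * n)) : v.rev ∈ firstValues τ ↔ v ∉ firstValues τ := by
  have hsymm : τ.symm v.rev = (τ.symm v).rev :=
    τ.injective (by rw [Equiv.apply_symm_apply, hτ, Equiv.apply_symm_apply])
  rw [mem_firstValues, mem_firstValues, hsymm, Fin.val_rev]
  omega

theorem firstValues_mirrorPerm (π : Perm (Fin n)) (A : Finset (Fin n)) :
    firstValues (mirrorPerm π A) = valueSet A := by
  ext v
  simp only [firstValues, mem_image, mem_filter, mem_univ, true_and]
  constructor
  · rintro ⟨j, hj, rfl⟩
    rw [mirrorPerm_of_lt π A hj]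
    exact valueSetEmb_mem A _
  · intro hv
    obtain ⟨r, rfl⟩ := exists_valueSetEmb_eq hv
    have hr := (π.symm r).isLt
    exact ⟨⟨π.symm r, by omega⟩, hr, by rw [mirrorPerm_of_lt π A hr]; simp⟩

theorem card_filter_le_firstValues (τ : Perm (Fin (2 * n))) :
    #((firstValues τ).filter fun v : Fin (2 * n) => n ≤ (v : ℕ))
      = #{j : Fin (2 * n) | (j : ℕ) < n ∧ n ≤ (τ j : ℕ)} := by
  rw [firstValues, filter_image, card_image_of_injective _ τ.injective, filter_filter]

theorem mirrorPerm_mem_mirroredD_iff (π : Perm (Fin n)) (A : Finset (Fin n)) :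
    mirrorPerm π A ∈ mirroredD n ↔ Even #A := by
  rw [mirroredD, Set.mem_ofPred_eq, ← card_filter_le_firstValues, firstValues_mirrorPerm,
    card_filter_le_valueSet]
  exact and_iff_right (mirrorPerm_mem_mirroredC π A)

theorem mirrorPerm_injective : Function.Injective (Function.uncurry (@mirrorPerm n)) := by
  rintro ⟨π, A⟩ ⟨π', A'⟩ h
  simp only [Function.uncurry_apply_pair] at h
  have hA : A = A' := by
    have hV := firstValues_mirrorPerm π A
    rw [h, firstValues_mirrorPerm] at hV
    ext w
    have hw : ((Fin.castLE (by omega) w : Fin (2 * n)) : ℕ) < n := by simp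
    have := mem_valueSet_of_lt (A := A) hw
    rw [← hV, mem_valueSet_of_lt hw] at this
    simpa [not_iff_not] using this.symm
  subst hA
  refine Prod.ext (Equiv.ext fun w => (valueSetEmb A).injective ?_) rfl
  have hw : ((Fin.castLE (by omega) w : Fin (2 * n)) : ℕ) < n := by simp
  have := congrArg (· (Fin.castLE (by omega) w)) h
  simpa [mirrorPerm_of_lt _ _ hw] using this

theorem exists_mirrorPerm_eq {τ : Perm (Fin (2 * n))} (hτ : τ ∈ mirroredC n) :
    ∃ π A, mirrorPerm π A = τ := by
  set A : Finset (Fin n) := {w | (Fin.castLE (by omega) w : Fin (2 * n)) ∉ firstValues τ}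
  have hV : valueSet A = firstValues τ := by
    ext v
    rcases lt_or_ge (v : ℕ) n with hv | hv
    · rw [mem_valueSet_of_lt hv]
      simp only [A, mem_filter, mem_univ, true_and, not_not]
      rfl
    · have hu : (v.rev : ℕ) < n := by rw [Fin.val_rev]; omega
      rw [← Fin.rev_rev v, rev_mem_valueSet_iff, rev_mem_firstValues_iff hτ,
        mem_valueSet_of_lt hu]
      simp only [A, mem_filter, mem_univ, true_and, not_not]
      rfl
  have hmem : ∀ w : Fin n, τ (Fin.castLE (by omega) w) ∈ valueSet A := fun w => by
    rw [hV, mem_firstValues, Equiv.symm_apply_apply]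
    simp
  choose g hg using fun w => exists_valueSetEmb_eq (hmem w)
  have hg_inj : Function.Injective g := fun a b hab => by
    have := congrArg (valueSetEmb A) hab
    rw [hg, hg] at this
    simpa using τ.injective this
  refine ⟨Equiv.ofBijective g (Finite.injective_iff_bijective.mp hg_inj), A,
    mirroredC_ext (mirrorPerm_mem_mirroredC _ _) hτ fun j hj => ?_⟩
  rw [mirrorPerm_of_lt _ _ hj, Equiv.ofBijective_apply, hg]
  rfl

open scoped Classical in
theorem ncard_hatPD (S' : Finset ℕ) :
    (hatPD n S').ncard = ∑ π : Perm (Fin n),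
      #{A : Finset (Fin n) | Even #A ∧ ∀ i, IsPeakHat n (mirrorPerm π A) i ↔ i ∈ S'} := by
  have himage : hatPD n S' = Function.uncurry mirrorPerm ''
      {p | Even #p.2 ∧ ∀ i, IsPeakHat n (mirrorPerm p.1 p.2) i ↔ i ∈ S'} := by
    ext τ
    constructor
    · rintro ⟨hτD, hpeak⟩
      obtain ⟨π, A, rfl⟩ := exists_mirrorPerm_eq hτD.1
      exact ⟨(π, A), ⟨(mirrorPerm_mem_mirroredD_iff π A).1 hτD, hpeak⟩, rfl⟩
    · rintro ⟨⟨π, A⟩, ⟨hA, hpeak⟩, rfl⟩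
      exact ⟨(mirrorPerm_mem_mirroredD_iff π A).2 hA, hpeak⟩
  rw [himage, Set.ncard_image_of_injective _ mirrorPerm_injective, ← coe_filter_univ,
    Set.ncard_coe_finset, card_filter, Fintype.sum_prod_type]
  simp only [card_filter]

theorem mirrorPerm_lt_iff (π : Perm (Fin n)) (A : Finset (Fin n)) {a b : ℕ}
    (ha : a < n) (hb : b < n) :
    mirrorPerm π A ⟨a, by omega⟩ < mirrorPerm π A ⟨b, by omega⟩ ↔ π ⟨a, ha⟩ < π ⟨b, hb⟩ := by
  rw [mirrorPerm_of_lt π A (j := ⟨a, _⟩) ha, mirrorPerm_of_lt π A (j := ⟨b, _⟩) hb,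
    OrderEmbedding.lt_iff_lt]

theorem mirroredC_apply_lt_iff {τ : Perm (Fin (2 * n))} (hτ : τ ∈ mirroredC n)
    (hn : 0 < n) : τ ⟨n, by omega⟩ < τ ⟨n - 1, by omega⟩ ↔ n ≤ (τ ⟨n - 1, by omega⟩ : ℕ) := by
  have hrev : (⟨n, by omega⟩ : Fin (2 * n)) = (⟨n - 1, by omega⟩ : Fin (2 * n)).rev := by
    ext
    simp only [Fin.val_rev]
    omega
  rw [hrev, hτ, Fin.lt_def, Fin.val_rev]
  omega

theorem isPeakHat_mirrorPerm_iff_of_lt (π : Perm (Fin n)) (A : Finset (Fin n)) {i : ℕ}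
    (hi : i < n) : IsPeakHat n (mirrorPerm π A) i ↔ IsPeak π i := by
  constructor
  · rintro ⟨⟨h1, _⟩, hl, hr⟩
    exact ⟨⟨h1, hi⟩, (mirrorPerm_lt_iff π A _ _).1 hl, (mirrorPerm_lt_iff π A _ _).1 hr⟩
  · rintro ⟨⟨h1, _⟩, hl, hr⟩
    exact ⟨⟨h1, hi.le⟩, (mirrorPerm_lt_iff π A _ _).2 hl, (mirrorPerm_lt_iff π A _ _).2 hr⟩

theorem isPeakHat_mirrorPerm_self_iff (π : Perm (Fin n)) (A : Finset (Fin n)) :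
    IsPeakHat n (mirrorPerm π A) n ↔ ∃ k, EndsAscentTo n k π ∧ n < k + #A := by
  constructor
  · rintro ⟨⟨h1, _⟩, hl, hr⟩
    rw [mirroredC_apply_lt_iff (mirrorPerm_mem_mirroredC π A) (by omega),
      mirrorPerm_of_lt π A (j := ⟨n - 1, _⟩) (show n - 1 < n by omega), le_valueSetEmb_iff] at hr
    exact ⟨_, ⟨h1, (mirrorPerm_lt_iff π A _ _).1 hl, rfl⟩, by simp only at hr; omega⟩
  · rintro ⟨k, ⟨h2, hl, rfl⟩, hk⟩
    refine ⟨⟨h2, le_rfl⟩, (mirrorPerm_lt_iff π A _ _).2 hl, ?_⟩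
    rw [mirroredC_apply_lt_iff (mirrorPerm_mem_mirroredC π A) (by omega),
      mirrorPerm_of_lt π A (j := ⟨n - 1, _⟩) (show n - 1 < n by omega), le_valueSetEmb_iff]
    simp only
    omega

theorem peaks_mirrorPerm_iff {S' : Finset ℕ} (hS' : ∀ x ∈ S', x ≤ n) (π : Perm (Fin n))
    (A : Finset (Fin n)) :
    (∀ i, IsPeakHat n (mirrorPerm π A) i ↔ i ∈ S') ↔
      π ∈ peakSetEq n (S'.erase n) ∧ ((∃ k, EndsAscentTo n k π ∧ n < k + #A) ↔ n ∈ S') := by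
  rw [← isPeakHat_mirrorPerm_self_iff]
  constructor
  · intro h
    refine ⟨fun i => ?_, h n⟩
    rcases lt_or_ge i n with hi | hi
    · rw [← isPeakHat_mirrorPerm_iff_of_lt π A hi, h i, mem_erase, and_iff_right hi.ne]
    · exact iff_of_false (fun ⟨⟨_, h⟩, _⟩ => by omega)
        (fun hmem => by have := hS' i (mem_of_mem_erase hmem); have := ne_of_mem_erase hmem; omega)
  · rintro ⟨hπ, htop⟩ i
    rcases lt_trichotomy i n with hi | rfl | hi
    · rw [isPeakHat_mirrorPerm_iff_of_lt π A hi, hπ i, mem_erase, and_iff_right hi.ne]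
    · exact htop
    · exact iff_of_false (fun ⟨⟨_, h⟩, _⟩ => by omega) (fun hmem => by have := hS' i hmem; omega)

end MirroredPerm

section PeakClasses

variable {n : ℕ} {π : Perm (Fin n)}

theorem EndsAscentTo.eq {k k' : ℕ} (h : EndsAscentTo n k π) (h' : EndsAscentTo n k' π) :
    k = k' := by
  obtain ⟨_, _, rfl⟩ := h
  obtain ⟨_, _, rfl⟩ := h'
  rfl

theorem EndsDescent.not_endsAscentTo {k : ℕ} (h : EndsDescent n π) : ¬ EndsAscentTo n k π := by
  obtain ⟨_, hd⟩ := h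
  rintro ⟨_, ha, _⟩
  exact lt_asymm hd ha

theorem endsDescent_or_endsAscentTo (hn : 2 ≤ n) (π : Perm (Fin n)) :
    EndsDescent n π ∨ ∃ k ∈ Icc 1 n, EndsAscentTo n k π := by
  have hne : π ⟨n - 1, by omega⟩ ≠ π ⟨n - 2, by omega⟩ :=
    π.injective.ne (by simp only [ne_eq, Fin.mk.injEq]; omega)
  rcases hne.lt_or_gt with h | h
  · exact Or.inl ⟨hn, h⟩
  · have := (π ⟨n - 1, by omega⟩).isLt
    exact Or.inr ⟨_, mem_Icc.2 ⟨by omega, by omega⟩, hn, h, rfl⟩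

end PeakClasses

open scoped Classical in
theorem card_even_peaks_mirrorPerm {n : ℕ} (hn : 2 ≤ n) {S' : Finset ℕ} (hS' : ∀ x ∈ S', x ≤ n)
    (π : Perm (Fin n)) :
    #{A : Finset (Fin n) | Even #A ∧ ∀ i, IsPeakHat n (mirrorPerm π A) i ↔ i ∈ S'}
      = ∑ k ∈ Icc 1 n, (if π ∈ ascTo n (S'.erase n) k then
          #{A : Finset (Fin n) | Even #A ∧ (n < k + #A ↔ n ∈ S')} else 0)
        + if π ∈ underlineP n (S'.erase n) then
            #{A : Finset (Fin n) | Even #A ∧ n ∉ S'} else 0 := by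
  by_cases hπ : π ∈ peakSetEq n (S'.erase n)
  · rcases endsDescent_or_endsAscentTo hn π with hd | ⟨k₀, hk₀, ha⟩
    · rw [sum_eq_zero fun k _ => if_neg fun h => hd.not_endsAscentTo h.2, if_pos ⟨hπ, hd⟩,
        zero_add]
      refine congrArg card (filter_congr fun A _ => ?_)
      simp [peaks_mirrorPerm_iff hS', hπ, hd.not_endsAscentTo]
    · rw [sum_eq_single_of_mem k₀ hk₀ fun k _ hk => if_neg fun h => hk (h.2.eq ha),
        if_pos ⟨hπ, ha⟩, if_neg fun h => h.2.not_endsAscentTo ha, add_zero]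
      have htop : ∀ t, (∃ k, EndsAscentTo n k π ∧ n < k + t) ↔ n < k₀ + t := fun t =>
        ⟨fun ⟨k, hk, hlt⟩ => hk.eq ha ▸ hlt, fun h => ⟨k₀, ha, h⟩⟩
      refine congrArg card (filter_congr fun A _ => ?_)
      rw [peaks_mirrorPerm_iff hS', htop, and_iff_right hπ]
  · rw [sum_eq_zero fun k _ => if_neg fun h => hπ h.1, if_neg fun h => hπ h.1, add_zero]
    exact card_eq_zero.2 <| filter_false_of_mem fun A _ h =>
      hπ ((peaks_mirrorPerm_iff hS' π A).1 h.2).1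

open scoped Classical in
theorem ncard_hatPD_eq_sum {n : ℕ} (hn : 2 ≤ n) {S' : Finset ℕ} (hS' : ∀ x ∈ S', x ≤ n) :
    (hatPD n S').ncard =
      ∑ k ∈ Icc 1 n, (ascTo n (S'.erase n) k).ncard
          * #{A : Finset (Fin n) | Even #A ∧ (n < k + #A ↔ n ∈ S')}
        + (underlineP n (S'.erase n)).ncard * #{A : Finset (Fin n) | Even #A ∧ n ∉ S'} := by
  rw [ncard_hatPD, sum_congr rfl fun π _ => card_even_peaks_mirrorPerm hn hS' π, sum_add_distrib,
    sum_comm, Fintype.sum_ite_mem_eq_ncard_mul]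
  simp only [Fintype.sum_ite_mem_eq_ncard_mul]

theorem stmt15 (n : ℕ) (hn : 2 ≤ n) (heven : Even n)
    (S : Finset ℕ) (hS : ∀ x ∈ S, 0 < x ∧ x < n) :
    (hatPD n S).ncard =
      (∑ k ∈ Finset.Icc 1 (n / 2),
        ((ascTo n S (2 * k - 1)).ncard + (ascTo n S (2 * k)).ncard) * Phi (n - 1) (2 * k - 1))
        + (underlineP n S).ncard * 2 ^ (n - 1) ∧
    (hatPD n (insert n S)).ncard =
      ∑ k ∈ Finset.Icc 1 (n / 2),
        ((ascTo n S (2 * k - 1)).ncard + (ascTo n S (2 * k)).ncard) * Psi (n - 1) (2 * k - 1) := by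
  have hnS : n ∉ S := fun h => lt_irrefl n (hS n h).2
  have hS_le : ∀ x ∈ S, x ≤ n := fun x hx => (hS x hx).2.le
  have hn0 : 0 < n := by omega
  have hhalf : 2 * (n / 2) = n := Nat.two_mul_div_two_of_even heven
  have regroup := fun g : ℕ → ℕ =>
    hhalf ▸ sum_Icc_mul_succ_div_two (fun k => (ascTo n S k).ncard) (fun j => g (2 * j - 1)) (n / 2)
  constructor
  · rw [ncard_hatPD_eq_sum hn hS_le, erase_eq_of_notMem hnS, ← regroup]
    simp only [hnS, iff_false, not_lt, not_false_eq_true, and_true, card_even_subsets heven hn0]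
    congr 1
    exact sum_congr rfl fun k hk => by rw [card_even_subsets_add_le heven hn0 (mem_Icc.1 hk).2]
  · rw [ncard_hatPD_eq_sum hn ((forall_mem_insert _ _ _).2 ⟨le_rfl, hS_le⟩), erase_insert hnS,
      ← regroup]
    simp only [mem_insert_self, iff_true, not_true_eq_false, and_false, filter_false, card_empty,
      mul_zero, add_zero]
    exact sum_congr rfl fun k hk => by rw [card_even_subsets_lt_add heven hn0 (mem_Icc.1 hk).2]
end
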